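/- arXiv:2603.12190 — 5 statements merged into one kernel-verified Lean document; each statement's English description precedes it below -/
import Mathlib

section
/- Let k ≥ 1 and l ≥ 0 be integers, let f be a rational function on ℂ, and let M[f] = ∏_{i=0}^{k} (f^{(i)})^{n_i} be a monomial of degree d and weight w (with n_k ≥ 1). If f(z) ≠ 0 for all z ∈ ℂ and f^{(k)}(z) ≠ 0 for all z ∈ ℂ, then for every nonzero constant a ∈ ℂ the function a·M[f](z) − z^l has at least one simple zero in ℂ (a zero of multiplicity exactly 1). -/
open Filter Set

/-- The differential monomial `M[f] = ∏_{i=0}^k (f^{(i)})^{ν i}`. -/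
noncomputable def diffMonomial (k : ℕ) (ν : ℕ → ℕ) (f : ℂ → ℂ) (z : ℂ) : ℂ :=
  ∏ i ∈ Finset.range (k + 1), (iteratedDeriv i f z) ^ (ν i)

/-- The degree of the monomial with exponents `ν`. -/
def monDegree (k : ℕ) (ν : ℕ → ℕ) : ℕ := ∑ i ∈ Finset.range (k + 1), ν i

/-- The weight of the monomial with exponents `ν`. -/
def monWeight (k : ℕ) (ν : ℕ → ℕ) : ℕ := ∑ i ∈ Finset.range (k + 1), (i + 1) * ν i

/-!
Since `f = p / q` omits `0` and `p`, `q` are coprime, `p` is a nonzero constant `c`; since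
`f^{(k)}` omits `0`, `q` is not constant. Write `f^{(k)} = c N_k / q^{k+1}` with `N_k` a polynomial.
At a root of `q` of multiplicity `μ` the numerator `N_k` vanishes to order exactly `k (μ - 1)`,
while `deg N_k = k (deg q - 1)`; as `N_k` has no roots outside those of `q`, counting roots
shows that `q` has a single root `b`. Hence `f = A (z - b)^{-n}` and `M[f] = B (z - b)^{-m}` with
`m ≥ n + k ≥ 2`, so the zeros of `a M[f] - z^l` are the roots of `P = z^l (z - b)^m - a B`, with
the same multiplicities. If every root of `P` were multiple, each would satisfy
`l (z - b) + m z = 0`, so `P = (z - z₁)^{l+m}`; but `P'(b) = 0` because `m ≥ 2`, while `P(b) ≠ 0`.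
-/

open Polynomial

section AlgClosed

variable {K : Type*} [Field K] [IsAlgClosed K]

lemma exists_eq_C_of_forall_eval_ne_zero {p : K[X]} (hp : ∀ z, p.eval z ≠ 0) :
    ∃ c ≠ 0, p = C c := by
  have hp0 : p ≠ 0 := fun h => hp 0 (by simp [h])
  have hroots : p.roots = 0 := Multiset.eq_zero_of_forall_notMem fun x hx =>
    hp x ((mem_roots hp0).mp hx)
  have hdeg := IsAlgClosed.roots_eq_zero_iff_natDegree_eq_zero.mp hroots
  refine ⟨p.coeff 0, fun h => hp0 ?_, eq_C_of_natDegree_eq_zero hdeg⟩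
  rw [eq_C_of_natDegree_eq_zero hdeg, h, map_zero]

lemma exists_eq_C_of_isCoprime {p q : K[X]} (hpq : IsCoprime p q)
    (hp : ∀ z, q.eval z ≠ 0 → p.eval z ≠ 0) : ∃ c ≠ 0, p = C c := by
  refine exists_eq_C_of_forall_eval_ne_zero fun z hpz => ?_
  by_cases hqz : q.eval z = 0
  · simpa [coe_aeval_eq_eval, hpz, hqz] using aeval_ne_zero_of_isCoprime hpq z
  · exact hp z hqz hpz

lemma natDegree_eq_sum_rootMultiplicity {p : K[X]} {s : Finset K} (hs : ∀ x ∈ p.roots, x ∈ s) :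
    p.natDegree = ∑ x ∈ s, p.rootMultiplicity x := by
  classical
  simp only [← count_roots, Multiset.sum_count_eq_card hs, IsAlgClosed.card_roots_eq_natDegree]

lemma eq_C_leadingCoeff_mul_X_sub_C_pow {p : K[X]} {b : K} (hb : ∀ x ∈ p.roots, x = b) :
    p = C p.leadingCoeff * (X - C b) ^ p.natDegree := by
  have hcard := IsAlgClosed.card_roots_eq_natDegree (p := p)
  have hroots : p.roots = Multiset.replicate p.natDegree b :=
    Multiset.eq_replicate.mpr ⟨hcard, hb⟩
  conv_lhs => rw [← C_leadingCoeff_mul_prod_multiset_X_sub_C hcard, hroots]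
  simp

end AlgClosed

section Numerator

variable {R : Type*} [CommRing R]

lemma natDegree_derivative_mul_le {P Q : R[X]} {d e : ℕ} (hP : P.natDegree ≤ d)
    (hQ : Q.natDegree ≤ e) : (derivative P * Q).natDegree ≤ d + e - 1 := by
  rcases Nat.eq_zero_or_pos d with rfl | hd
  · simp [derivative_of_natDegree_zero (Nat.le_zero.mp hP)]
  · have := natDegree_derivative_le P
    exact natDegree_mul_le.trans (by omega)

lemma coeff_derivative_mul_of_natDegree_le {P Q : R[X]} {d e : ℕ} (hP : P.natDegree ≤ d)
    (hQ : Q.natDegree ≤ e) : (derivative P * Q).coeff (d + e - 1) = d * P.coeff d * Q.coeff e := by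
  obtain rfl | ⟨d, rfl⟩ : d = 0 ∨ ∃ d', d = d' + 1 := by cases d <;> simp
  · simp [derivative_of_natDegree_zero (Nat.le_zero.mp hP)]
  · have hP' : (derivative P).natDegree ≤ d := (natDegree_derivative_le P).trans (by omega)
    rw [show d + 1 + e - 1 = d + e by omega, coeff_mul_add_eq_of_natDegree_le hP' hQ,
      coeff_derivative]
    push_cast
    ring

/-- `invDerivNum q j` is the numerator of the `j`-th derivative of `1 / q` over the
denominator `q ^ (j + 1)`. -/
noncomputable def invDerivNum (q : R[X]) : ℕ → R[X]
  | 0 => 1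
  | j + 1 => derivative (invDerivNum q j) * q - (j + 1 : R[X]) * invDerivNum q j * derivative q

lemma derivative_X_sub_C_pow_mul_mul_X_sub_C (b : R) (n : ℕ) (P : R[X]) :
    derivative ((X - C b) ^ n * P) * (X - C b) =
      (n : R[X]) * (X - C b) ^ n * P + (X - C b) ^ (n + 1) * derivative P := by
  cases n with
  | zero => simp [mul_comm]
  | succ n =>
    simp only [derivative_mul, derivative_X_sub_C_pow, Nat.add_sub_cancel, map_natCast]
    ring

variable [IsDomain R] [CharZero R]

lemma natDegree_invDerivNum_eq_and_ne_zero {q : R[X]} {t : ℕ} (hq : q.natDegree = t + 1) (j : ℕ) :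
    (invDerivNum q j).natDegree = j * t ∧ invDerivNum q j ≠ 0 := by
  induction j with
  | zero => simp [invDerivNum]
  | succ j ih =>
    obtain ⟨hdeg, hne⟩ := ih
    set N := invDerivNum q j
    have hN : invDerivNum q (j + 1) = derivative N * q - C ((j : R) + 1) * (derivative q * N) := by
      rw [invDerivNum, map_add, map_natCast, map_one]; ring
    have hdq : (derivative q).natDegree ≤ t := (natDegree_derivative_le q).trans (by omega)
    have hle : (invDerivNum q (j + 1)).natDegree ≤ (j + 1) * t := by
      rw [hN]
      refine (natDegree_sub_le _ _).trans (max_le ?_ ((natDegree_C_mul_le _ _).trans ?_))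
      · exact (natDegree_derivative_mul_le hdeg.le hq.le).trans (by rw [add_mul]; omega)
      · exact (natDegree_mul_le.trans (add_le_add hdq hdeg.le)).trans (by rw [add_mul]; omega)
    have hcoeff : (invDerivNum q (j + 1)).coeff ((j + 1) * t) =
        -((j + t + 1 : ℕ) : R) * (N.leadingCoeff * q.leadingCoeff) := by
      have h1 := coeff_derivative_mul_of_natDegree_le hdeg.le hq.le
      have h2 := coeff_derivative_mul_of_natDegree_le hq.le hdeg.le
      rw [show j * t + (t + 1) - 1 = (j + 1) * t by ring_nf; omega] at h1
      rw [show t + 1 + j * t - 1 = (j + 1) * t by ring_nf; omega] at h2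
      rw [hN, coeff_sub, coeff_C_mul, h1, h2, leadingCoeff, leadingCoeff, hdeg, hq]
      push_cast
      ring
    have hcoeff_ne : (invDerivNum q (j + 1)).coeff ((j + 1) * t) ≠ 0 := by
      rw [hcoeff]
      exact mul_ne_zero (neg_ne_zero.mpr (Nat.cast_ne_zero.mpr (by omega)))
        (mul_ne_zero (leadingCoeff_ne_zero.mpr hne)
          (leadingCoeff_ne_zero.mpr (ne_zero_of_natDegree_gt (n := 0) (by omega))))
    exact ⟨le_antisymm hle (le_natDegree_of_ne_zero hcoeff_ne),
      fun h => hcoeff_ne (by rw [h, coeff_zero])⟩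

lemma exists_invDerivNum_eq_X_sub_C_pow_mul {q Q : R[X]} {b : R} {t : ℕ}
    (hq : q = (X - C b) ^ (t + 1) * Q) (hQ : Q.eval b ≠ 0) (j : ℕ) :
    ∃ S : R[X], invDerivNum q j = (X - C b) ^ (j * t) * S ∧ S.eval b ≠ 0 := by
  induction j with
  | zero => exact ⟨1, by simp [invDerivNum], by simp⟩
  | succ j ih =>
    obtain ⟨S, hS, hSb⟩ := ih
    refine ⟨-(j + t + 1 : R[X]) * S * Q +
      (X - C b) * (derivative S * Q - (j + 1 : R[X]) * S * derivative Q), ?_, ?_⟩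
    · refine mul_left_cancel₀ (X_sub_C_ne_zero b) ?_
      have hN := derivative_X_sub_C_pow_mul_mul_X_sub_C b (j * t) S
      have hq' := derivative_X_sub_C_pow_mul_mul_X_sub_C b (t + 1) Q
      rw [invDerivNum, hS, hq]
      push_cast at hN hq'
      linear_combination hN * ((X - C b) ^ (t + 1) * Q) -
        (j + 1 : R[X]) * (X - C b) ^ (j * t) * S * hq'
    · have : ((j + t + 1 : ℕ) : R) ≠ 0 := Nat.cast_ne_zero.mpr (by omega)
      simp only [eval_add, eval_mul, eval_neg, eval_sub, eval_X, eval_C, eval_natCast, eval_one,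
        sub_self, zero_mul, add_zero]
      push_cast at this ⊢
      exact mul_ne_zero (mul_ne_zero (neg_ne_zero.mpr this) hSb) hQ

lemma rootMultiplicity_invDerivNum {q : R[X]} (hq : q ≠ 0) {b : R} (hb : q.IsRoot b) (j : ℕ) :
    (invDerivNum q j).rootMultiplicity b = j * (q.rootMultiplicity b - 1) := by
  obtain ⟨t, ht⟩ : ∃ t, q.rootMultiplicity b = t + 1 :=
    Nat.exists_eq_add_one.mpr ((rootMultiplicity_pos hq).mpr hb)
  have hfac := pow_mul_divByMonic_rootMultiplicity_eq q b
  have hQb := eval_divByMonic_pow_rootMultiplicity_ne_zero b hq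
  rw [ht] at hfac hQb
  obtain ⟨S, hS, hSb⟩ := exists_invDerivNum_eq_X_sub_C_pow_mul hfac.symm hQb j
  have hS0 : S ≠ 0 := fun h => hSb (by rw [h, eval_zero])
  rw [hS, rootMultiplicity_mul (mul_ne_zero (pow_ne_zero _ (X_sub_C_ne_zero b)) hS0),
    rootMultiplicity_X_sub_C_pow, rootMultiplicity_eq_zero hSb, ht]
  simp

end Numerator

lemma exists_forall_mem_roots_eq_of_invDerivNum_ne_zero {K : Type*} [Field K] [IsAlgClosed K]
    [CharZero K] {q : K[X]} (hq : 0 < q.natDegree) {k : ℕ} (hk : 1 ≤ k)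
    (h : ∀ z, q.eval z ≠ 0 → (invDerivNum q k).eval z ≠ 0) : ∃ b, ∀ x ∈ q.roots, x = b := by
  classical
  obtain ⟨t, ht⟩ := Nat.exists_eq_add_one.mpr hq
  have hq0 : q ≠ 0 := ne_zero_of_natDegree_gt hq
  set S := q.roots.toFinset
  obtain ⟨hNdeg, hN0⟩ := natDegree_invDerivNum_eq_and_ne_zero ht k
  have hNroots : ∀ x ∈ (invDerivNum q k).roots, x ∈ S := fun x hx => by
    rw [Multiset.mem_toFinset, mem_roots hq0]
    exact not_not.mp fun hqx => h x hqx ((mem_roots hN0).mp hx)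
  have hkt : k * t = k * ∑ x ∈ S, (q.rootMultiplicity x - 1) := by
    rw [← hNdeg, natDegree_eq_sum_rootMultiplicity hNroots, Finset.mul_sum]
    exact Finset.sum_congr rfl fun x hx =>
      rootMultiplicity_invDerivNum hq0 (isRoot_of_mem_roots (Multiset.mem_toFinset.mp hx)) k
  have hdeg : t + 1 = ∑ x ∈ S, q.rootMultiplicity x :=
    ht ▸ natDegree_eq_sum_rootMultiplicity fun x hx => Multiset.mem_toFinset.mpr hx
  have hsplit : ∑ x ∈ S, q.rootMultiplicity x = ∑ x ∈ S, (q.rootMultiplicity x - 1) + S.card := by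
    rw [Finset.card_eq_sum_ones, ← Finset.sum_add_distrib]
    refine Finset.sum_congr rfl fun x hx => (Nat.sub_add_cancel ?_).symm
    exact (rootMultiplicity_pos hq0).mpr (isRoot_of_mem_roots (Multiset.mem_toFinset.mp hx))
  have hcard : S.card = 1 := by
    have := Nat.eq_of_mul_eq_mul_left (by omega) hkt
    omega
  obtain ⟨b, hb⟩ := Finset.card_eq_one.mp hcard
  exact ⟨b, fun x hx => Finset.mem_singleton.mp (hb ▸ Multiset.mem_toFinset.mpr hx)⟩

section SimpleRoot

variable {K : Type*} [Field K]

lemma mul_eval_derivative_X_pow_mul_X_sub_C_pow_sub_C (b B x : K) (l m : ℕ) :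
    x * (x - b) * (derivative (X ^ l * (X - C b) ^ m - C B)).eval x =
      (l * (x - b) + m * x) * (x ^ l * (x - b) ^ m) := by
  simp only [derivative_sub, derivative_C, sub_zero, derivative_mul, derivative_X_pow,
    derivative_X_sub_C_pow, eval_add, eval_mul, eval_C, eval_pow, eval_X, eval_sub]
  rcases l with _ | l <;> rcases m with _ | m <;> simp <;> ring

variable [CharZero K]

lemma eq_div_of_isRoot_of_isRoot_derivative {b B x : K} (hB : B ≠ 0) {l m : ℕ} (hm : 1 ≤ m)
    (hx : (X ^ l * (X - C b) ^ m - C B).IsRoot x)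
    (hx' : (derivative (X ^ l * (X - C b) ^ m - C B)).IsRoot x) : x = l * b / (l + m) := by
  have key := mul_eval_derivative_X_pow_mul_X_sub_C_pow_sub_C b B x l m
  have hPx : x ^ l * (x - b) ^ m = B := by simpa [sub_eq_zero] using hx
  rw [hx'.eq_zero, hPx, mul_zero] at key
  rw [eq_div_iff (by exact_mod_cast (show l + m ≠ 0 by omega))]
  linear_combination (mul_eq_zero.mp key.symm).resolve_right hB

lemma exists_isRoot_not_isRoot_derivative_X_pow_mul_X_sub_C_pow_sub_C [IsAlgClosed K] {b B : K}
    (hB : B ≠ 0) (l : ℕ) {m : ℕ} (hm : 2 ≤ m) :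
    ∃ z, (X ^ l * (X - C b) ^ m - C B).IsRoot z ∧
      ¬(derivative (X ^ l * (X - C b) ^ m - C B)).IsRoot z := by
  by_contra! hmultiple
  set P : K[X] := X ^ l * (X - C b) ^ m - C B
  have hmonic : (X ^ l * (X - C b) ^ m : K[X]).Monic :=
    (monic_X_pow l).mul ((monic_X_sub_C b).pow m)
  have hdeg₀ : (X ^ l * (X - C b) ^ m : K[X]).natDegree = l + m := by
    rw [(monic_X_pow l).natDegree_mul ((monic_X_sub_C b).pow m)]
    simp
  have hdeg : P.natDegree = l + m := by rw [natDegree_sub_C, hdeg₀]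
  have hlead : P.leadingCoeff = 1 :=
    hmonic.sub_of_left (degree_C_le.trans_lt (natDegree_pos_iff_degree_pos.mp (by omega)))
  have hP'b : (derivative P).eval b = 0 := by
    simp [P, derivative_mul, derivative_X_sub_C_pow, zero_pow (show m ≠ 0 by omega),
      zero_pow (show m - 1 ≠ 0 by omega)]
  have hPb : P.eval b = -B := by simp [P, zero_pow (show m ≠ 0 by omega)]
  have hfac : P = (X - C (l * b / (l + m))) ^ (l + m) := by
    have := eq_C_leadingCoeff_mul_X_sub_C_pow fun x hx =>
      eq_div_of_isRoot_of_isRoot_derivative hB (by omega) (isRoot_of_mem_roots hx)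
        (hmultiple x (isRoot_of_mem_roots hx))
    rwa [hlead, hdeg, map_one, one_mul] at this
  rw [hfac, derivative_X_sub_C_pow] at hP'b
  rw [hfac] at hPb
  have hbz : b - l * b / (l + m) = 0 := by
    simp only [eval_mul, eval_C, eval_pow, eval_sub, eval_X, mul_eq_zero, pow_eq_zero_iff',
      Nat.cast_eq_zero] at hP'b
    exact (hP'b.resolve_left (by omega)).1
  rw [eval_pow, eval_sub, eval_X, eval_C, hbz, zero_pow (by omega)] at hPb
  exact hB (neg_eq_zero.mp hPb.symm)

end SimpleRoot

section Calculus

variable {𝕜 : Type*} [NontriviallyNormedField 𝕜]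

lemma iteratedDeriv_eq_invDerivNum {q : 𝕜[X]} {f : 𝕜 → 𝕜} {c : 𝕜}
    (hf : ∀ z, q.eval z ≠ 0 → f z = c / q.eval z) (j : ℕ) {z : 𝕜} (hz : q.eval z ≠ 0) :
    iteratedDeriv j f z = c * (invDerivNum q j).eval z / q.eval z ^ (j + 1) := by
  induction j generalizing z with
  | zero => simp [invDerivNum, hf z hz]
  | succ j ih =>
    have hU : IsOpen {z : 𝕜 | q.eval z ≠ 0} := isOpen_ne.preimage q.continuous
    have hev : iteratedDeriv j f =ᶠ[nhds z]
        fun w => c * (invDerivNum q j).eval w / q.eval w ^ (j + 1) :=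
      Filter.eventuallyEq_of_mem (hU.mem_nhds hz) fun w hw => ih hw
    have hpow : HasDerivAt (fun w => q.eval w ^ (j + 1))
        ((j + 1) * q.eval z ^ j * (derivative q).eval z) z := by
      simpa using (q.hasDerivAt z).fun_pow (j + 1)
    rw [iteratedDeriv_succ, hev.deriv_eq,
      ((((invDerivNum q j).hasDerivAt z).const_mul c).fun_div hpow (pow_ne_zero _ hz)).deriv,
      invDerivNum]
    simp only [eval_sub, eval_mul, eval_add, eval_natCast, eval_one]
    field_simp
    ring

lemma iteratedDeriv_const_mul_sub_zpow (A b : 𝕜) (m : ℤ) (i : ℕ) (z : 𝕜) :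
    iteratedDeriv i (fun z => A * (z - b) ^ m) z =
      A * (∏ j ∈ Finset.range i, ((m : 𝕜) - j)) * (z - b) ^ (m - i) := by
  rw [iteratedDeriv_const_mul_field, iteratedDeriv_comp_sub_const (f := fun z => z ^ m),
    iteratedDeriv_eq_iterate, iter_deriv_zpow', mul_assoc]

variable [CharZero 𝕜]

lemma exists_iteratedDeriv_eq_div_sub_pow {f : 𝕜 → 𝕜} {A b : 𝕜} {n : ℕ} (hA : A ≠ 0)
    (hn : 0 < n) (hf : ∀ z, z ≠ b → f z = A / (z - b) ^ n) (i : ℕ) :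
    ∃ Aᵢ ≠ 0, ∀ z, z ≠ b → iteratedDeriv i f z = Aᵢ / (z - b) ^ (n + i) := by
  have hEq : Set.EqOn f (fun z => A * (z - b) ^ (-n : ℤ)) {z | z ≠ b} := fun z hz => by
    simp [hf z hz, div_eq_mul_inv]
  refine ⟨A * ∏ j ∈ Finset.range i, (((-n : ℤ) : 𝕜) - j), mul_ne_zero hA ?_, fun z hz => ?_⟩
  · refine Finset.prod_ne_zero_iff.mpr fun j _ => ?_
    have : ((n + j : ℕ) : 𝕜) ≠ 0 := Nat.cast_ne_zero.mpr (by omega)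
    push_cast at this ⊢
    contrapose! this
    linear_combination -this
  · rw [hEq.iteratedDeriv_of_isOpen isOpen_ne i hz, iteratedDeriv_const_mul_sub_zpow,
      show (-n : ℤ) - i = -((n + i : ℕ) : ℤ) by push_cast; ring, zpow_neg, zpow_natCast,
      div_eq_mul_inv]

lemma eval_eq_mul_sub_pow_of_iteratedDeriv_ne_zero [IsAlgClosed 𝕜] {q : 𝕜[X]} (hq : q ≠ 0)
    {f : 𝕜 → 𝕜} {c : 𝕜} (hf : ∀ z, q.eval z ≠ 0 → f z = c / q.eval z) {k : ℕ} (hk : 1 ≤ k)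
    (hfk : ∀ z, q.eval z ≠ 0 → iteratedDeriv k f z ≠ 0) :
    0 < q.natDegree ∧ ∃ b, ∀ z, q.eval z = q.leadingCoeff * (z - b) ^ q.natDegree := by
  have hqdeg : 0 < q.natDegree := by
    by_contra! hdeg
    obtain ⟨q₀, rfl⟩ : ∃ q₀, q = C q₀ := ⟨_, eq_C_of_natDegree_eq_zero (Nat.le_zero.mp hdeg)⟩
    have hq₀ : q₀ ≠ 0 := fun h => hq (by rw [h, map_zero])
    have hfC : f = fun _ => c / q₀ := funext fun z => by simpa using hf z (by simpa using hq₀)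
    exact hfk 0 (by simpa using hq₀) (by simp [hfC, iteratedDeriv_const]; omega)
  obtain ⟨b, hb⟩ := exists_forall_mem_roots_eq_of_invDerivNum_ne_zero hqdeg hk fun z hz hN =>
    hfk z hz (by rw [iteratedDeriv_eq_invDerivNum hf k hz, hN, mul_zero, zero_div])
  refine ⟨hqdeg, b, fun z => ?_⟩
  conv_lhs => rw [eq_C_leadingCoeff_mul_X_sub_C_pow hb]
  simp

lemma exists_simple_zero_div_sub_pow_sub_pow [IsAlgClosed 𝕜] {B b : 𝕜} (hB : B ≠ 0) {m : ℕ}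
    (hm : 2 ≤ m) (l : ℕ) :
    ∃ z₀, z₀ ≠ b ∧ B / (z₀ - b) ^ m - z₀ ^ l = 0 ∧
      deriv (fun z => B / (z - b) ^ m - z ^ l) z₀ ≠ 0 := by
  obtain ⟨z₀, hroot, hsimple⟩ :=
    exists_isRoot_not_isRoot_derivative_X_pow_mul_X_sub_C_pow_sub_C hB l hm
  set P : 𝕜[X] := X ^ l * (X - C b) ^ m - C B
  have hz₀ : z₀ ≠ b := by
    rintro rfl
    simp [P, zero_pow (show m ≠ 0 by omega), hB] at hroot
  have hz₀' : (z₀ - b) ^ m ≠ 0 := pow_ne_zero _ (sub_ne_zero.mpr hz₀)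
  have hEq : ∀ z, z ≠ b → B / (z - b) ^ m - z ^ l = -P.eval z / (z - b) ^ m := fun z hz => by
    have : (z - b) ^ m ≠ 0 := pow_ne_zero _ (sub_ne_zero.mpr hz)
    field_simp
    simp [P, mul_comm]
  refine ⟨z₀, hz₀, by rw [hEq z₀ hz₀, hroot.eq_zero, neg_zero, zero_div], ?_⟩
  have hd := (P.hasDerivAt z₀).fun_neg.fun_div (((hasDerivAt_id' z₀).sub_const b).fun_pow m) hz₀'
  rw [Filter.EventuallyEq.deriv_eq (Filter.eventuallyEq_of_mem (isOpen_ne.mem_nhds hz₀) hEq),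
    hd.deriv, hroot.eq_zero]
  simpa [hz₀'] using hsimple

end Calculus

lemma exists_diffMonomial_eq_div_sub_pow {f : ℂ → ℂ} {A b : ℂ} {n : ℕ} (hA : A ≠ 0) (hn : 0 < n)
    (hf : ∀ z, z ≠ b → f z = A / (z - b) ^ n) (k : ℕ) (ν : ℕ → ℕ) :
    ∃ B ≠ 0, ∀ z, z ≠ b →
      diffMonomial k ν f z = B / (z - b) ^ ∑ i ∈ Finset.range (k + 1), (n + i) * ν i := by
  choose A' hA' hf' using exists_iteratedDeriv_eq_div_sub_pow hA hn hf
  refine ⟨∏ i ∈ Finset.range (k + 1), A' i ^ ν i,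
    Finset.prod_ne_zero_iff.mpr fun i _ => pow_ne_zero _ (hA' i), fun z hz => ?_⟩
  simp only [diffMonomial, hf' _ z hz, div_pow, ← pow_mul, Finset.prod_div_distrib,
    Finset.prod_pow_eq_pow_sum]

theorem stmt2_general
    (k : ℕ) (hk : 1 ≤ k) (l : ℕ)
    (f : ℂ → ℂ) (p q : Polynomial ℂ) (hq : q ≠ 0) (hpq : IsCoprime p q)
    (hf : ∀ z : ℂ, q.eval z ≠ 0 → f z = p.eval z / q.eval z)
    (ν : ℕ → ℕ) (hνk : 1 ≤ ν k)
    (hf0 : ∀ z : ℂ, q.eval z ≠ 0 → f z ≠ 0)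
    (hfk : ∀ z : ℂ, q.eval z ≠ 0 → iteratedDeriv k f z ≠ 0)
    (a : ℂ) (ha : a ≠ 0) :
    ∃ z₀ : ℂ, q.eval z₀ ≠ 0 ∧
      a * diffMonomial k ν f z₀ - z₀ ^ l = 0 ∧
      deriv (fun z => a * diffMonomial k ν f z - z ^ l) z₀ ≠ 0 := by
  obtain ⟨c, hc, rfl⟩ := exists_eq_C_of_isCoprime hpq fun z hz hpz =>
    hf0 z hz (by rw [hf z hz, hpz, zero_div])
  simp only [eval_C] at hf
  obtain ⟨hn, b, hqb⟩ := eval_eq_mul_sub_pow_of_iteratedDeriv_ne_zero hq hf hk hfk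
  have hqz : ∀ z, z ≠ b → q.eval z ≠ 0 := fun z hz => by
    rw [hqb]
    exact mul_ne_zero (leadingCoeff_ne_zero.mpr hq) (pow_ne_zero _ (sub_ne_zero.mpr hz))
  obtain ⟨B, hB, hM⟩ := exists_diffMonomial_eq_div_sub_pow (f := f)
    (div_ne_zero hc (leadingCoeff_ne_zero.mpr hq)) hn
    (fun z hz => by rw [hf z (hqz z hz), hqb, div_div]) k ν
  set m := ∑ i ∈ Finset.range (k + 1), (q.natDegree + i) * ν i
  have hm : 2 ≤ m := calc
    2 ≤ (q.natDegree + k) * ν k := Nat.le_mul_of_pos_right _ hνk |>.trans' (by omega)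
    _ ≤ m := Finset.single_le_sum (f := fun i => (q.natDegree + i) * ν i)
      (fun i _ => Nat.zero_le _) (Finset.self_mem_range_succ k)
  obtain ⟨z₀, hz₀, hzero, hderiv⟩ :=
    exists_simple_zero_div_sub_pow_sub_pow (mul_ne_zero ha hB) hm l
  have hEq : ∀ z, z ≠ b → a * diffMonomial k ν f z - z ^ l = a * B / (z - b) ^ m - z ^ l :=
    fun z hz => by rw [hM z hz, mul_div_assoc]
  refine ⟨z₀, hqz z₀ hz₀, by rw [hEq z₀ hz₀, hzero], ?_⟩
  rwa [Filter.EventuallyEq.deriv_eq (Filter.eventuallyEq_of_mem (isOpen_ne.mem_nhds hz₀) hEq)]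

/-- If a rational function `f` (written in lowest terms as `p/q`) omits `0` and
`f^{(k)}` omits `0`, then `a·M[f](z) - z^l` has at least one simple zero in `ℂ`. -/
theorem stmt2
    (k : ℕ) (hk : 1 ≤ k) (l : ℕ)
    (f : ℂ → ℂ) (p q : Polynomial ℂ) (hq : q ≠ 0) (hpq : IsCoprime p q)
    (hf : ∀ z : ℂ, q.eval z ≠ 0 → f z = p.eval z / q.eval z)
    (ν : ℕ → ℕ) (hνk : 1 ≤ ν k) (d w : ℕ)
    (hd : d = monDegree k ν) (hw : w = monWeight k ν)
    (hf0 : ∀ z : ℂ, q.eval z ≠ 0 → f z ≠ 0)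
    (hfk : ∀ z : ℂ, q.eval z ≠ 0 → iteratedDeriv k f z ≠ 0)
    (a : ℂ) (ha : a ≠ 0) :
    ∃ z₀ : ℂ, q.eval z₀ ≠ 0 ∧
      a * diffMonomial k ν f z₀ - z₀ ^ l = 0 ∧
      deriv (fun z => a * diffMonomial k ν f z - z ^ l) z₀ ≠ 0 :=
  stmt2_general k hk l f p q hq hpq hf ν hνk hf0 hfk a ha
end

section
/- Let k be a positive integer and let f be a rational function on ℂ. If f(z) ≠ 0 for all z ∈ ℂ and f^{(k)}(z) ≠ 0 for all z ∈ ℂ, then there exist a nonzero constant C ∈ ℂ, a point z_1 ∈ ℂ, and a positive integer r such that f(z) = C/(z − z_1)^r for all z ≠ z_1. -/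
/-!
Coprimality and the absence of zeros of `f = p / q` force `p` to have no roots, so `p` is a
nonzero constant; and `q` is not constant, since otherwise `f⁽ᵏ⁾ = 0`. By induction
`f⁽ʲ⁾ = N_j / q ^ (j + 1)` with `N_{j+1} = N_j' q - (j + 1) N_j q'`; comparing leading terms and
lowest-order terms at each root `a` of `q` (of multiplicity `m_a`) gives `deg N_j = j (n - 1)`,
`n = deg q`, and `mult_a N_j = j (m_a - 1)`. Since `f⁽ᵏ⁾` has no zeros, all roots of `N_k` are
roots of `q`, so `k (n - 1) = ∑_a k (m_a - 1) = k (n - s)` with `s` the number of distinct roots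
of `q`. Hence `s = 1` and `q = C (z - z₁) ^ n`.
-/

open Filter Set Polynomial

namespace Polynomial

section CommRing

variable {R : Type*} [CommRing R]

theorem coeff_derivative_natDegree_sub_one (p : R[X]) :
    (derivative p).coeff (p.natDegree - 1) = p.leadingCoeff * p.natDegree := by
  rcases Nat.eq_zero_or_pos p.natDegree with hp | hp
  · simp [derivative_of_natDegree_zero hp, hp]
  · rw [coeff_derivative, Nat.sub_add_cancel hp, ← Nat.cast_add_one, Nat.sub_add_cancel hp]
    rfl

theorem derivative_mul_sub_C_mul_of_X_sub_C_pow (a c : R) (h u : R[X]) (s r : ℕ) (hr : 1 ≤ r) :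
    derivative ((X - C a) ^ s * h) * ((X - C a) ^ r * u)
        - C c * ((X - C a) ^ s * h * derivative ((X - C a) ^ r * u)) =
      (X - C a) ^ (s + r - 1) * (C ((s : R) - c * r) * (h * u) +
        (X - C a) * (derivative h * u - C c * (h * derivative u))) := by
  obtain ⟨r, rfl⟩ := Nat.exists_eq_add_of_le hr
  cases s with
  | zero =>
    simp only [pow_zero, one_mul, derivative_mul, derivative_pow, derivative_X, derivative_C,
      sub_zero, mul_one, Nat.cast_zero, Nat.cast_add, Nat.cast_one, map_sub, map_mul, map_zero,
      zero_add, Nat.add_sub_cancel_left]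
    ring
  | succ s =>
    simp only [derivative_mul, derivative_pow, derivative_X, derivative_C, map_sub,
      map_mul, Nat.add_sub_cancel, sub_zero, mul_one, Nat.cast_add, Nat.cast_one,
      show s + 1 + (1 + r) - 1 = s + 1 + r by omega, Nat.add_sub_cancel_left]
    ring

theorem coeff_derivative_mul_sub_C_mul (c : R) {g q : R[X]} (hq : 1 ≤ q.natDegree) :
    (derivative g * q - C c * (g * derivative q)).coeff (g.natDegree + q.natDegree - 1) =
      ((g.natDegree : R) - c * q.natDegree) * (g.leadingCoeff * q.leadingCoeff) := by
  have hgq' : (g * derivative q).coeff (g.natDegree + q.natDegree - 1) =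
      g.leadingCoeff * (q.leadingCoeff * q.natDegree) := by
    rw [show g.natDegree + q.natDegree - 1 = g.natDegree + (q.natDegree - 1) by omega,
      coeff_mul_add_eq_of_natDegree_le le_rfl (natDegree_derivative_le q),
      coeff_derivative_natDegree_sub_one]
    rfl
  have hg'q : (derivative g * q).coeff (g.natDegree + q.natDegree - 1) =
      g.leadingCoeff * g.natDegree * q.leadingCoeff := by
    rcases Nat.eq_zero_or_pos g.natDegree with hd | hd
    · simp [derivative_of_natDegree_zero hd, hd]
    rw [show g.natDegree + q.natDegree - 1 = g.natDegree - 1 + q.natDegree by omega,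
      coeff_mul_add_eq_of_natDegree_le (natDegree_derivative_le g) le_rfl,
      coeff_derivative_natDegree_sub_one]
    rfl
  rw [coeff_sub, coeff_C_mul, hgq', hg'q]
  ring

theorem natDegree_derivative_mul_sub_C_mul_le (c : R) (g q : R[X]) (hq : 1 ≤ q.natDegree) :
    (derivative g * q - C c * (g * derivative q)).natDegree ≤ g.natDegree + q.natDegree - 1 := by
  refine (natDegree_sub_le _ _).trans (max_le ?_ ?_)
  · rcases Nat.eq_zero_or_pos g.natDegree with hd | hd
    · simp [derivative_of_natDegree_zero hd]
    · have := natDegree_derivative_le g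
      exact natDegree_mul_le.trans (by omega)
  · have := natDegree_derivative_le q
    exact (natDegree_C_mul_le _ _).trans (natDegree_mul_le.trans (by omega))

end CommRing

section IsDomain

variable {R : Type*} [CommRing R] [IsDomain R]

theorem rootMultiplicity_derivative_mul_sub_C_mul {a c : R} {g q : R[X]} (hg : g ≠ 0) (hq : q ≠ 0)
    (ha : q.IsRoot a) (hne : (g.rootMultiplicity a : R) ≠ c * q.rootMultiplicity a) :
    (derivative g * q - C c * (g * derivative q)).rootMultiplicity a =
      g.rootMultiplicity a + q.rootMultiplicity a - 1 := by
  obtain ⟨h, hgh, hh⟩ := g.exists_eq_pow_rootMultiplicity_mul_and_not_dvd hg a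
  obtain ⟨u, hqu, hu⟩ := q.exists_eq_pow_rootMultiplicity_mul_and_not_dvd hq a
  rw [dvd_iff_isRoot, IsRoot] at hh hu
  set w := C ((g.rootMultiplicity a : R) - c * q.rootMultiplicity a) * (h * u)
    + (X - C a) * (derivative h * u - C c * (h * derivative u))
  have hwa : w.eval a ≠ 0 := by
    simpa [w] using mul_ne_zero (sub_ne_zero.2 hne) (mul_ne_zero hh hu)
  have hw : w ≠ 0 := fun h0 => hwa (by simp [h0])
  have key := derivative_mul_sub_C_mul_of_X_sub_C_pow a c h u (g.rootMultiplicity a) _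
    ((rootMultiplicity_pos hq).2 ha)
  rw [← hgh, ← hqu] at key
  rw [key, rootMultiplicity_mul (mul_ne_zero (pow_ne_zero _ (X_sub_C_ne_zero a)) hw),
    rootMultiplicity_X_sub_C_pow, rootMultiplicity_eq_zero hwa, add_zero]

theorem natDegree_derivative_mul_sub_C_mul {c : R} {g q : R[X]} (hg : g ≠ 0) (hq : q ≠ 0)
    (hq1 : 1 ≤ q.natDegree) (hne : (g.natDegree : R) ≠ c * q.natDegree) :
    derivative g * q - C c * (g * derivative q) ≠ 0 ∧
      (derivative g * q - C c * (g * derivative q)).natDegree = g.natDegree + q.natDegree - 1 := by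
  have hcoeff : (derivative g * q - C c * (g * derivative q)).coeff
      (g.natDegree + q.natDegree - 1) ≠ 0 := by
    rw [coeff_derivative_mul_sub_C_mul c hq1]
    exact mul_ne_zero (sub_ne_zero.2 hne) (mul_ne_zero (leadingCoeff_ne_zero.2 hg)
      (leadingCoeff_ne_zero.2 hq))
  exact ⟨fun h0 => hcoeff (by rw [h0, coeff_zero]),
    (natDegree_derivative_mul_sub_C_mul_le c g q hq1).antisymm (le_natDegree_of_ne_zero hcoeff)⟩

end IsDomain

noncomputable def iterDerivNumerator {R : Type*} [CommRing R] (p q : R[X]) : ℕ → R[X]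
  | 0 => p
  | j + 1 => derivative (iterDerivNumerator p q j) * q -
      C ((j : R) + 1) * (iterDerivNumerator p q j * derivative q)

section CharZero

variable {R : Type*} [CommRing R] [IsDomain R] [CharZero R] {p q : R[X]}

theorem natDegree_iterDerivNumerator (hp : p ≠ 0) (hpq : p.natDegree < q.natDegree) (j : ℕ) :
    iterDerivNumerator p q j ≠ 0 ∧
      (iterDerivNumerator p q j).natDegree = p.natDegree + j * (q.natDegree - 1) := by
  induction j with
  | zero => exact ⟨hp, by simp [iterDerivNumerator]⟩
  | succ j ih =>
    obtain ⟨hg, hdeg⟩ := ih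
    have hq : q ≠ 0 := ne_zero_of_natDegree_gt hpq
    have hne : ((iterDerivNumerator p q j).natDegree : R) ≠ ((j : R) + 1) * q.natDegree := by
      rw [hdeg]
      exact_mod_cast (show p.natDegree + j * (q.natDegree - 1) ≠ (j + 1) * q.natDegree by
        rw [Nat.mul_sub_one, add_mul]
        omega)
    obtain ⟨hE, hEdeg⟩ := natDegree_derivative_mul_sub_C_mul hg hq (by omega) hne
    refine ⟨hE, ?_⟩
    rw [iterDerivNumerator, hEdeg, hdeg, add_one_mul]
    omega

theorem rootMultiplicity_iterDerivNumerator (hp : p ≠ 0) (hpq : p.natDegree < q.natDegree)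
    {a : R} (ha : q.IsRoot a) (hpa : p.rootMultiplicity a < q.rootMultiplicity a) (j : ℕ) :
    (iterDerivNumerator p q j).rootMultiplicity a =
      p.rootMultiplicity a + j * (q.rootMultiplicity a - 1) := by
  induction j with
  | zero => simp [iterDerivNumerator]
  | succ j ih =>
    have hne : ((iterDerivNumerator p q j).rootMultiplicity a : R) ≠
        ((j : R) + 1) * q.rootMultiplicity a := by
      rw [ih]
      exact_mod_cast (show p.rootMultiplicity a + j * (q.rootMultiplicity a - 1) ≠
          (j + 1) * q.rootMultiplicity a by
        rw [Nat.mul_sub_one, add_mul]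
        omega)
    rw [iterDerivNumerator, rootMultiplicity_derivative_mul_sub_C_mul
      (natDegree_iterDerivNumerator hp hpq j).1 (ne_zero_of_natDegree_gt hpq) ha hne, ih,
      add_one_mul]
    omega

end CharZero

end Polynomial

section Deriv

variable {𝕜 : Type*} [NontriviallyNormedField 𝕜]

theorem deriv_eq_div_pow_of_eqOn_div_pow {F : 𝕜 → 𝕜} {g q : 𝕜[X]} {j : ℕ}
    (hF : ∀ z, q.eval z ≠ 0 → F z = g.eval z / q.eval z ^ (j + 1)) {z₀ : 𝕜}
    (hz₀ : q.eval z₀ ≠ 0) :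
    deriv F z₀ = (derivative g * q - C ((j : 𝕜) + 1) * (g * derivative q)).eval z₀ /
      q.eval z₀ ^ (j + 2) := by
  have hev : F =ᶠ[nhds z₀] fun z => g.eval z / q.eval z ^ (j + 1) :=
    eventually_of_mem ((isOpen_compl_singleton.preimage q.continuous).mem_nhds hz₀) hF
  have hpow : HasDerivAt (fun z => q.eval z ^ (j + 1))
      (((j + 1 : ℕ) : 𝕜) * q.eval z₀ ^ j * (derivative q).eval z₀) z₀ := by
    simpa using (q.hasDerivAt z₀).fun_pow (j + 1)
  rw [hev.deriv_eq, ((g.hasDerivAt z₀).fun_div hpow (pow_ne_zero _ hz₀)).deriv]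
  simp only [eval_sub, eval_mul, eval_C]
  field_simp
  push_cast
  ring

theorem iteratedDeriv_eq_iterDerivNumerator_div {f : 𝕜 → 𝕜} {p q : 𝕜[X]}
    (hf : ∀ z, q.eval z ≠ 0 → f z = p.eval z / q.eval z) (j : ℕ) {z : 𝕜} (hz : q.eval z ≠ 0) :
    iteratedDeriv j f z = (iterDerivNumerator p q j).eval z / q.eval z ^ (j + 1) := by
  induction j generalizing z with
  | zero => simpa [iterDerivNumerator] using hf z hz
  | succ j ih =>
    rw [iteratedDeriv_succ]
    exact deriv_eq_div_pow_of_eqOn_div_pow (fun w hw => ih hw) hz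

end Deriv

namespace Polynomial

section IsAlgClosed

variable {K : Type*} [Field K] [IsAlgClosed K]

theorem sum_rootMultiplicity_eq_natDegree {g : K[X]} {s : Finset K}
    (hs : ∀ a, g.IsRoot a → a ∈ s) : ∑ a ∈ s, g.rootMultiplicity a = g.natDegree := by
  classical
  simp_rw [← count_roots]
  rw [Multiset.sum_count_eq_card fun a ha => hs a (mem_roots'.1 ha).2,
    IsAlgClosed.card_roots_eq_natDegree]

theorem exists_forall_isRoot_eq {q g : K[X]} {k : ℕ} (hk : 0 < k) (hq : 0 < q.natDegree)
    (hg_roots : ∀ a, g.IsRoot a → q.IsRoot a) (hg_deg : g.natDegree = k * (q.natDegree - 1))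
    (hg_mult : ∀ a, q.IsRoot a → g.rootMultiplicity a = k * (q.rootMultiplicity a - 1)) :
    ∃ z, ∀ a, q.IsRoot a → a = z := by
  classical
  have hq0 : q ≠ 0 := ne_zero_of_natDegree_gt hq
  have hmem : ∀ a, q.IsRoot a → a ∈ q.roots.toFinset := fun a ha =>
    Multiset.mem_toFinset.2 ((mem_roots hq0).2 ha)
  have hsum_q := sum_rootMultiplicity_eq_natDegree hmem
  have hsum_g : k * ∑ a ∈ q.roots.toFinset, (q.rootMultiplicity a - 1) =
      k * (q.natDegree - 1) := by
    rw [← hg_deg, ← sum_rootMultiplicity_eq_natDegree fun a ha => hmem a (hg_roots a ha),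
      Finset.mul_sum]
    refine Finset.sum_congr rfl fun a ha => (hg_mult a ?_).symm
    exact (mem_roots hq0).1 (Multiset.mem_toFinset.1 ha)
  have hsum_sub : ∑ a ∈ q.roots.toFinset, (q.rootMultiplicity a - 1) + q.roots.toFinset.card =
      q.natDegree := by
    rw [← hsum_q, Finset.card_eq_sum_ones, ← Finset.sum_add_distrib]
    refine Finset.sum_congr rfl fun a ha => Nat.sub_add_cancel ?_
    exact (rootMultiplicity_pos hq0).2 ((mem_roots hq0).1 (Multiset.mem_toFinset.1 ha))
  obtain ⟨z, hz⟩ := IsAlgClosed.exists_root q (natDegree_pos_iff_degree_pos.1 hq).ne'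
  have hcard_pos : q.roots.toFinset.card ≠ 0 := Finset.card_ne_zero_of_mem (hmem z hz)
  have := Nat.eq_of_mul_eq_mul_left hk hsum_g
  obtain ⟨z, hz⟩ := Finset.card_eq_one.1 (show q.roots.toFinset.card = 1 by omega)
  exact ⟨z, fun a ha => by simpa [hz] using hmem a ha⟩

theorem eq_C_mul_X_sub_C_pow_of_forall_isRoot_eq {q : K[X]} {z : K}
    (h : ∀ a, q.IsRoot a → a = z) : q = C q.leadingCoeff * (X - C z) ^ q.natDegree := by
  have hroots : q.roots = Multiset.replicate q.natDegree z :=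
    Multiset.eq_replicate.2
      ⟨IsAlgClosed.card_roots_eq_natDegree, fun b hb => h b (mem_roots'.1 hb).2⟩
  conv_lhs =>
    rw [← C_leadingCoeff_mul_prod_multiset_X_sub_C (p := q) IsAlgClosed.card_roots_eq_natDegree]
  rw [hroots, Multiset.map_replicate, Multiset.prod_replicate]

end IsAlgClosed

end Polynomial

theorem exists_eq_C_of_isCoprime_of_div_ne_zero {K : Type*} [Field K] [IsAlgClosed K]
    {f : K → K} {p q : K[X]} (hpq : IsCoprime p q)
    (hf : ∀ z, q.eval z ≠ 0 → f z = p.eval z / q.eval z) (hf0 : ∀ z, q.eval z ≠ 0 → f z ≠ 0) :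
    ∃ c ≠ 0, p = C c := by
  have hp_root : ∀ z, ¬ p.IsRoot z := fun z hpz =>
    (aeval_ne_zero_of_isCoprime hpq z).elim (fun h => h (by simpa using hpz))
      fun hqz => hf0 z (by simpa using hqz) (by rw [hf z (by simpa using hqz), hpz, zero_div])
  have hp : p = C (p.coeff 0) := IsAlgClosed.roots_eq_zero_iff.1
    (Multiset.eq_zero_of_forall_notMem fun z hz => hp_root z (mem_roots'.1 hz).2)
  exact ⟨p.coeff 0, fun h0 => hp_root 0 (by rw [hp, h0, C_0]; simp), hp⟩

theorem exists_forall_isRoot_eq_of_iteratedDeriv_ne_zero {𝕜 : Type*} [NontriviallyNormedField 𝕜]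
    [IsAlgClosed 𝕜] [CharZero 𝕜] {k : ℕ} (hk : 0 < k) {f : 𝕜 → 𝕜} {c : 𝕜} {q : 𝕜[X]}
    (hc : c ≠ 0) (hq : 0 < q.natDegree) (hf : ∀ z, q.eval z ≠ 0 → f z = c / q.eval z)
    (hfk : ∀ z, q.eval z ≠ 0 → iteratedDeriv k f z ≠ 0) :
    ∃ z₁, ∀ a, q.IsRoot a → a = z₁ := by
  have hp : C c ≠ 0 := C_ne_zero.2 hc
  have hpq : (C c).natDegree < q.natDegree := by simpa using hq
  have hN_roots : ∀ a, (iterDerivNumerator (C c) q k).IsRoot a → q.IsRoot a := fun a ha =>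
    by_contra fun hqa => hfk a hqa <| by
      rw [iteratedDeriv_eq_iterDerivNumerator_div (p := C c) (by simpa using hf) k hqa,
        ha.eq_zero, zero_div]
  have hN_mult : ∀ a, q.IsRoot a →
      (iterDerivNumerator (C c) q k).rootMultiplicity a = k * (q.rootMultiplicity a - 1) :=
    fun a ha => by
      simpa using rootMultiplicity_iterDerivNumerator hp hpq ha
        (by simpa using (rootMultiplicity_pos (ne_zero_of_natDegree_gt hq)).2 ha) k
  exact exists_forall_isRoot_eq hk hq hN_roots
    (by simpa using (natDegree_iterDerivNumerator hp hpq k).2) hN_mult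

/-- A zero-free rational function whose `k`-th derivative is also zero-free
must be of the form `C/(z - z₁)^r`. -/
theorem stmt7
    (k : ℕ) (hk : 0 < k)
    (f : ℂ → ℂ) (p q : Polynomial ℂ) (hq : q ≠ 0) (hpq : IsCoprime p q)
    (hf : ∀ z : ℂ, q.eval z ≠ 0 → f z = p.eval z / q.eval z)
    (hf0 : ∀ z : ℂ, q.eval z ≠ 0 → f z ≠ 0)
    (hfk : ∀ z : ℂ, q.eval z ≠ 0 → iteratedDeriv k f z ≠ 0) :
    ∃ (C : ℂ) (z₁ : ℂ) (r : ℕ), C ≠ 0 ∧ 0 < r ∧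
      ∀ z : ℂ, z ≠ z₁ → f z = C / (z - z₁) ^ r := by
  obtain ⟨c, hc, rfl⟩ := exists_eq_C_of_isCoprime_of_div_ne_zero hpq hf hf0
  simp only [eval_C] at hf
  have hn : 0 < q.natDegree := by
    by_contra! h0
    obtain ⟨b, rfl⟩ := natDegree_eq_zero.1 (Nat.le_zero.1 h0)
    have hb : b ≠ 0 := by rintro rfl; exact hq C_0
    have hfc : f = fun _ => c / b := funext fun z => by simpa using hf z (by simpa using hb)
    exact hfk 0 (by simpa using hb) (by simp [hfc, iteratedDeriv_const, hk.ne'])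
  obtain ⟨z₁, hz₁⟩ := exists_forall_isRoot_eq_of_iteratedDeriv_ne_zero hk hc hn hf hfk
  have hq_eval : ∀ z, q.eval z = q.leadingCoeff * (z - z₁) ^ q.natDegree := fun z => by
    conv_lhs => rw [eq_C_mul_X_sub_C_pow_of_forall_isRoot_eq hz₁]
    simp
  refine ⟨c / q.leadingCoeff, z₁, q.natDegree, div_ne_zero hc (leadingCoeff_ne_zero.2 hq), hn,
    fun z hz => ?_⟩
  have hqz : q.eval z ≠ 0 := by
    rw [hq_eval]
    exact mul_ne_zero (leadingCoeff_ne_zero.2 hq) (pow_ne_zero _ (sub_ne_zero.2 hz))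
  rw [hf z hqz, hq_eval, div_div]
end

section
/- Let C ∈ ℂ be nonzero, let z_1, …, z_t ∈ ℂ be distinct points, let r_1, …, r_t be positive integers, set r = r_1 + ⋯ + r_t, and let f(z) = C/((z − z_1)^{r_1}⋯(z − z_t)^{r_t}). Then for every positive integer k there is a polynomial Q_k of degree at most k(t−1) with leading term B·z^{k(t−1)}, where B = (−1)^k · r(r+1)⋯(r+k−1) · C ≠ 0, such that f^{(k)}(z) = Q_k(z)/∏_{j=1}^{t} (z − z_j)^{r_j + k} for all z ∉ {z_1, …, z_t}. -/
/-!
Write `P = ∏ⱼ (X - zⱼ)` and `Dₘ = ∏ⱼ (X - zⱼ)^{mⱼ}`. Logarithmic differentiation gives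
`Dₘ' · P = Dₘ · Sₘ` with `Sₘ = ∑ⱼ mⱼ ∏_{i ≠ j} (X - zᵢ)`, so the quotient rule turns `Q / Dₘ` into
`(Q' P - Q Sₘ) / D_{m+1}`. Iterating from `Q₀ = C` gives the numerators `Q_k`. Since `P` is monic of
degree `t` and `Sₘ` has degree `t - 1` with leading coefficient `∑ⱼ mⱼ`, each step raises the degree
bound by `t - 1` and multiplies the top coefficient by `k (t - 1) - ∑ⱼ (rⱼ + k) = -(r + k)`.
-/

open Polynomial Finset Lagrange Filter

noncomputable section

theorem natDegree_derivative_mul_le_s10 {R : Type*} [Semiring R] {p q : R[X]} {m n : ℕ}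
    (hp : p.natDegree ≤ m) (hq : q.natDegree ≤ n + 1) :
    (derivative p * q).natDegree ≤ m + n := by
  rcases m with _ | m
  · simp [derivative_of_natDegree_zero (Nat.le_zero.mp hp)]
  · have hp' : (derivative p).natDegree ≤ m := (natDegree_derivative_le p).trans (by omega)
    exact (natDegree_mul_le_of_le hp' hq).trans (by omega)

theorem coeff_derivative_mul_of_natDegree_le_s10 {R : Type*} [Semiring R] {p q : R[X]} {m n : ℕ}
    (hp : p.natDegree ≤ m) (hq : q.natDegree ≤ n + 1) :
    (derivative p * q).coeff (m + n) = m * p.coeff m * q.coeff (n + 1) := by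
  rcases m with _ | m
  · simp [derivative_of_natDegree_zero (Nat.le_zero.mp hp)]
  · rw [show m + 1 + n = m + (n + 1) by omega, coeff_mul_add_eq_of_natDegree_le
      ((natDegree_derivative_le p).trans (by omega)) hq, coeff_derivative, ← Nat.cast_succ,
      (Nat.cast_commute _ _).eq]

section Algebra

variable {R : Type*} [CommRing R] {ι : Type*} [Fintype ι] [DecidableEq ι]

def nodalWeightedSum (z : ι → R) (m : ι → ℕ) : R[X] :=
  ∑ j, (m j : R[X]) * nodal (univ.erase j) z

theorem natDegree_nodal_univ_erase [Nontrivial R] (z : ι → R) (j : ι) :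
    (nodal (univ.erase j) z).natDegree = Fintype.card ι - 1 := by
  rw [natDegree_nodal, card_erase_of_mem (mem_univ j), card_univ]

theorem natDegree_nodalWeightedSum_le [Nontrivial R] (z : ι → R) (m : ι → ℕ) :
    (nodalWeightedSum z m).natDegree ≤ Fintype.card ι - 1 :=
  natDegree_sum_le_of_forall_le _ _ fun j _ =>
    (natDegree_mul_le_of_le (natDegree_natCast (m j)).le
      (natDegree_nodal_univ_erase z j).le).trans (zero_add _).le

theorem coeff_nodalWeightedSum [Nontrivial R] (z : ι → R) (m : ι → ℕ) :
    (nodalWeightedSum z m).coeff (Fintype.card ι - 1) = ∑ j, (m j : R) := by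
  refine (finsetSum_coeff _ _ _).trans (sum_congr rfl fun j _ => ?_)
  rw [coeff_natCast_mul, ← natDegree_nodal_univ_erase z j, nodal_monic.coeff_natDegree, mul_one]

theorem derivative_prod_X_sub_C_pow_mul_nodal (z : ι → R) (m : ι → ℕ) :
    derivative (∏ j, (X - C (z j)) ^ m j) * nodal univ z
      = (∏ j, (X - C (z j)) ^ m j) * nodalWeightedSum z m := by
  rw [derivative_prod_finset, nodalWeightedSum, sum_mul, mul_sum]
  refine sum_congr rfl fun j _ => ?_
  have hpow : C (m j : R) * (X - C (z j)) ^ (m j - 1) * (X - C (z j))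
      = (m j : R[X]) * (X - C (z j)) ^ m j := by
    rcases Nat.eq_zero_or_pos (m j) with h | h
    · simp [h]
    · rw [mul_assoc, pow_sub_one_mul h.ne', map_natCast]
  rw [nodal_eq_mul_nodal_erase (mem_univ j), derivative_X_sub_C_pow,
    ← mul_prod_erase univ (fun i => (X - C (z i)) ^ m i) (mem_univ j)]
  linear_combination (∏ i ∈ univ.erase j, (X - C (z i)) ^ m i) * nodal (univ.erase j) z * hpow

/-- `derivNumerator z r c k` is the numerator of the `k`-th derivative of `c / ∏ⱼ (x - zⱼ)^{rⱼ}`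
over the denominator `∏ⱼ (x - zⱼ)^{rⱼ + k}`. -/
def derivNumerator (z : ι → R) (r : ι → ℕ) (c : R) : ℕ → R[X]
  | 0 => C c
  | k + 1 => derivative (derivNumerator z r c k) * nodal univ z
      - derivNumerator z r c k * nodalWeightedSum z (fun j => r j + k)

variable [Nontrivial R] (z : ι → R) (r : ι → ℕ) (c : R)

theorem natDegree_derivNumerator_le (k : ℕ) :
    (derivNumerator z r c k).natDegree ≤ k * (Fintype.card ι - 1) := by
  induction k with
  | zero => simp [derivNumerator]
  | succ k ih =>
    have hP : (nodal univ z).natDegree ≤ (Fintype.card ι - 1) + 1 := by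
      rw [natDegree_nodal, card_univ]; omega
    rw [derivNumerator, add_one_mul]
    exact (natDegree_sub_le_of_le (natDegree_derivative_mul_le_s10 ih hP)
      (natDegree_mul_le_of_le ih (natDegree_nodalWeightedSum_le z _))).trans (max_self _).le

theorem coeff_derivNumerator [Nonempty ι] (k : ℕ) :
    (derivNumerator z r c k).coeff (k * (Fintype.card ι - 1))
      = (-1) ^ k * (∏ i ∈ range k, ((∑ j, r j + i : ℕ) : R)) * c := by
  obtain ⟨d, hd⟩ := Nat.exists_eq_add_one_of_ne_zero (Fintype.card_ne_zero (α := ι))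
  have hP : (nodal univ z).natDegree = d + 1 := by simp [hd]
  have hS (m : ι → ℕ) : (nodalWeightedSum z m).natDegree ≤ d := by
    simpa [hd] using natDegree_nodalWeightedSum_le z m
  have hS_coeff (m : ι → ℕ) : (nodalWeightedSum z m).coeff d = ∑ j, (m j : R) := by
    simpa [hd] using coeff_nodalWeightedSum z m
  induction k with
  | zero => simp [derivNumerator]
  | succ k ih =>
    have hQ : (derivNumerator z r c k).natDegree ≤ k * d := by
      simpa [hd] using natDegree_derivNumerator_le z r c k
    rw [hd, Nat.add_sub_cancel] at ih ⊢
    rw [derivNumerator, coeff_sub, add_one_mul, coeff_derivative_mul_of_natDegree_le_s10 hQ hP.le,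
      ← hP, nodal_monic.coeff_natDegree, coeff_mul_add_eq_of_natDegree_le hQ (hS _), hS_coeff,
      ih, prod_range_succ]
    push_cast [sum_add_distrib, sum_const, card_univ, hd, nsmul_eq_mul]
    ring

end Algebra

section Analysis

variable {𝕜 : Type*} [NontriviallyNormedField 𝕜] {ι : Type*} [Fintype ι] [DecidableEq ι]

theorem hasDerivAt_eval_div_prod_pow (Q : 𝕜[X]) (z : ι → 𝕜) (m : ι → ℕ) {x : 𝕜}
    (hx : ∀ j, x ≠ z j) :
    HasDerivAt (fun y => Q.eval y / ∏ j, (y - z j) ^ m j)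
      ((derivative Q * nodal univ z - Q * nodalWeightedSum z m).eval x
        / ∏ j, (x - z j) ^ (m j + 1)) x := by
  set D : 𝕜[X] := ∏ j, (X - C (z j)) ^ m j
  have hD (y : 𝕜) : D.eval y = ∏ j, (y - z j) ^ m j := by simp [D, eval_prod]
  have hDx : D.eval x ≠ 0 :=
    hD x ▸ prod_ne_zero_iff.mpr fun j _ => pow_ne_zero _ (sub_ne_zero.mpr (hx j))
  have hPx : (nodal univ z).eval x ≠ 0 := eval_nodal_not_at_node fun j _ => hx j
  have hsucc : ∏ j, (x - z j) ^ (m j + 1) = D.eval x * (nodal univ z).eval x := by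
    simp [hD, eval_nodal, pow_succ, prod_mul_distrib]
  have key : (derivative D).eval x * (nodal univ z).eval x
      = D.eval x * (nodalWeightedSum z m).eval x := by
    simpa only [eval_mul] using congr_arg (eval x) (derivative_prod_X_sub_C_pow_mul_nodal z m)
  simp_rw [← hD]
  refine ((Q.hasDerivAt x).div (D.hasDerivAt x) hDx).congr_deriv ?_
  rw [hsucc, eval_sub, eval_mul, eval_mul,
    div_eq_div_iff (pow_ne_zero 2 hDx) (mul_ne_zero hDx hPx)]
  linear_combination -(Q.eval x * D.eval x) * key

theorem iteratedDeriv_div_prod_pow (c : 𝕜) (z : ι → 𝕜) (r : ι → ℕ) (k : ℕ) {x : 𝕜}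
    (hx : ∀ j, x ≠ z j) :
    iteratedDeriv k (fun y => c / ∏ j, (y - z j) ^ r j) x
      = (derivNumerator z r c k).eval x / ∏ j, (x - z j) ^ (r j + k) := by
  induction k generalizing x with
  | zero => simp [derivNumerator]
  | succ k ih =>
    have hnear : iteratedDeriv k (fun y => c / ∏ j, (y - z j) ^ r j) =ᶠ[nhds x]
        fun y => (derivNumerator z r c k).eval y / ∏ j, (y - z j) ^ (r j + k) :=
      (eventually_all.2 fun j => eventually_ne_nhds (hx j)).mono fun y hy => ih hy
    rw [iteratedDeriv_succ, hnear.deriv_eq]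
    simpa [derivNumerator, add_assoc] using
      (hasDerivAt_eval_div_prod_pow _ z (fun j => r j + k) hx).deriv

end Analysis

end

theorem stmt10_general
    (t : ℕ) (ht : 0 < t) (C : ℂ) (hC : C ≠ 0)
    (z : Fin t → ℂ)
    (r : Fin t → ℕ) (hr : ∀ j, 0 < r j)
    (k : ℕ) :
    ∃ Q : Polynomial ℂ,
      Q.degree ≤ (k * (t - 1) : ℕ) ∧
      Q.coeff (k * (t - 1))
        = (-1 : ℂ) ^ k * (∏ i ∈ Finset.range k, (((∑ j, r j) + i : ℕ) : ℂ)) * C ∧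
      (-1 : ℂ) ^ k * (∏ i ∈ Finset.range k, (((∑ j, r j) + i : ℕ) : ℂ)) * C ≠ 0 ∧
      ∀ x : ℂ, (∀ j, x ≠ z j) →
        iteratedDeriv k (fun y => C / ∏ j, (y - z j) ^ (r j)) x
          = Q.eval x / ∏ j, (x - z j) ^ (r j + k) := by
  have : Nonempty (Fin t) := ⟨⟨0, ht⟩⟩
  have hr_sum : 0 < ∑ j, r j := sum_pos (fun j _ => hr j) univ_nonempty
  refine ⟨derivNumerator z r C k, ?_, ?_, ?_, fun x hx => iteratedDeriv_div_prod_pow C z r k hx⟩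
  · simpa using natDegree_le_iff_degree_le.mp (natDegree_derivNumerator_le z r C k)
  · simpa using coeff_derivNumerator z r C k
  · refine mul_ne_zero (mul_ne_zero (pow_ne_zero _ (by norm_num))
      (prod_ne_zero_iff.2 fun i _ => ?_)) hC
    exact_mod_cast (by omega : ∑ j, r j + i ≠ 0)

/-- Structure of the `k`-th derivative of `C/∏ (z - z_j)^{r_j}`. -/
theorem stmt10
    (t : ℕ) (ht : 0 < t) (C : ℂ) (hC : C ≠ 0)
    (z : Fin t → ℂ) (hz : Function.Injective z)
    (r : Fin t → ℕ) (hr : ∀ j, 0 < r j)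
    (k : ℕ) (hk : 0 < k) :
    ∃ Q : Polynomial ℂ,
      Q.degree ≤ (k * (t - 1) : ℕ) ∧
      Q.coeff (k * (t - 1))
        = (-1 : ℂ) ^ k * (∏ i ∈ Finset.range k, (((∑ j, r j) + i : ℕ) : ℂ)) * C ∧
      (-1 : ℂ) ^ k * (∏ i ∈ Finset.range k, (((∑ j, r j) + i : ℕ) : ℂ)) * C ≠ 0 ∧
      ∀ x : ℂ, (∀ j, x ≠ z j) →
        iteratedDeriv k (fun y => C / ∏ j, (y - z j) ^ (r j)) x
          = Q.eval x / ∏ j, (x - z j) ^ (r j + k) :=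
  stmt10_general t ht C hC z r hr k
end

section
/- Let m ≥ 2 and l ≥ 1 be integers, let z_1 ∈ ℂ be nonzero, and let c ∈ ℂ be nonzero. Then there is no z_0 ∈ ℂ such that the polynomial identity c − z^l (z − z_1)^m = −(z − z_0)^{m+l} holds for all z ∈ ℂ. -/
/-!
Differentiating the identity at `z = z₁`: the left side has a zero of order `m ≥ 2` at `z₁`
in its non-constant part, so its derivative vanishes there, while the derivative
`(m + l) (z - z₀)^(m + l - 1)` of the right side vanishes only at `z₀`. Hence `z₀ = z₁`, and
evaluating at `z₁` gives `c = 0`.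
-/

theorem hasDerivAt_sub_pow_eq_zero_iff {𝕜 : Type*} [NontriviallyNormedField 𝕜] [CharZero 𝕜]
    {a b : 𝕜} {n : ℕ} (hn : 2 ≤ n) :
    HasDerivAt (fun z => (z - b) ^ n) 0 a ↔ a = b := by
  have hderiv : HasDerivAt (fun z => (z - b) ^ n) ((n : 𝕜) * (a - b) ^ (n - 1)) a := by
    simpa using ((hasDerivAt_id a).sub_const b).fun_pow n
  constructor
  · intro h
    have hzero := hderiv.unique h
    rw [mul_eq_zero, Nat.cast_eq_zero, pow_eq_zero_iff (by omega), sub_eq_zero] at hzero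
    exact hzero.resolve_left (by omega)
  · rintro rfl
    simpa [zero_pow (show n - 1 ≠ 0 by omega)] using hderiv

theorem stmt11_general
    (m l : ℕ) (hm : 2 ≤ m)
    (z₁ c : ℂ) (hc : c ≠ 0) :
    ¬ ∃ z₀ : ℂ, ∀ z : ℂ, c - z ^ l * (z - z₁) ^ m = -(z - z₀) ^ (m + l) := by
  rintro ⟨z₀, h⟩
  have hfun : (fun z => (z - z₀) ^ (m + l)) = fun z => z ^ l * (z - z₁) ^ m - c :=
    funext fun z => by linear_combination h z
  have hderiv : HasDerivAt (fun z => (z - z₀) ^ (m + l)) 0 z₁ := by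
    rw [hfun]
    simpa [zero_pow (show m ≠ 0 by omega)] using
      ((hasDerivAt_pow l z₁).mul ((hasDerivAt_sub_pow_eq_zero_iff hm).2 rfl)).sub_const c
  obtain rfl := (hasDerivAt_sub_pow_eq_zero_iff (by omega)).1 hderiv
  apply hc
  simpa [zero_pow (show m ≠ 0 by omega), zero_pow (show m + l ≠ 0 by omega)] using h z₁

/-- No `z₀` satisfies the polynomial identity `c - z^l (z - z₁)^m = -(z - z₀)^{m+l}`. -/
theorem stmt11
    (m l : ℕ) (hm : 2 ≤ m) (hl : 1 ≤ l)
    (z₁ c : ℂ) (hz₁ : z₁ ≠ 0) (hc : c ≠ 0) :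
    ¬ ∃ z₀ : ℂ, ∀ z : ℂ, c - z ^ l * (z - z₁) ^ m = -(z - z₀) ^ (m + l) :=
  stmt11_general m l hm z₁ c hc
end

section
/- Let Δ = {z ∈ ℂ : |z| < 1} and Δ' = Δ \ {0}. Let (f_j) be a sequence of holomorphic functions on Δ such that f_j(z) ≠ 0 for all z ∈ Δ and all j. If f_j → 0 locally uniformly on the punctured disk Δ', then f_j → 0 locally uniformly on the full disk Δ. -/
open Filter Set

/-- Zero-free holomorphic functions on the unit disk converging locally uniformly
to `0` on the punctured disk converge locally uniformly to `0` on the full disk. -/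
theorem stmt13
    (f : ℕ → ℂ → ℂ)
    (hf : ∀ j, DifferentiableOn ℂ (f j) (Metric.ball (0 : ℂ) 1))
    (hf0 : ∀ j, ∀ z ∈ Metric.ball (0 : ℂ) 1, f j z ≠ 0)
    (hconv : TendstoLocallyUniformlyOn f 0 Filter.atTop (Metric.ball (0 : ℂ) 1 \ {0})) :
    TendstoLocallyUniformlyOn f 0 Filter.atTop (Metric.ball (0 : ℂ) 1) := by
  rw [tendstoLocallyUniformlyOn_iff_forall_isCompact Metric.isOpen_ball]
  intro K hK hKc
  -- find r ∈ (0,1) with K ⊆ closedBall 0 r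
  obtain ⟨r, hr1, hKr⟩ : ∃ r < 1, K ⊆ Metric.closedBall (0 : ℂ) r := by
    rcases K.eq_empty_or_nonempty with h | h
    · exact ⟨1/2, by norm_num, by simp [h]⟩
    · obtain ⟨z, hz, hmax⟩ := hKc.exists_isMaxOn h (continuous_norm.continuousOn)
      refine ⟨‖z‖, by simpa using hK hz, fun w hw => ?_⟩
      simpa [Metric.mem_closedBall] using hmax hw
  set r' : ℝ := max r (1/2) with hr'
  have hr'0 : 0 < r' := lt_of_lt_of_le (by norm_num) (le_max_right _ _)
  have hr'1 : r' < 1 := max_lt hr1 (by norm_num)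
  have hKr' : K ⊆ Metric.closedBall (0 : ℂ) r' :=
    hKr.trans (Metric.closedBall_subset_closedBall (le_max_left _ _))
  -- the sphere of radius r' is a compact subset of the punctured disk
  have hsub : Metric.sphere (0 : ℂ) r' ⊆ Metric.ball (0 : ℂ) 1 \ {0} := by
    intro z hz
    rw [mem_sphere_zero_iff_norm] at hz
    constructor
    · rw [Metric.mem_ball, dist_zero_right, hz]; exact hr'1
    · simp only [mem_singleton_iff]
      intro h; rw [h] at hz; simp at hz; exact hr'0.ne' hz.symm
  have hopen : IsOpen (Metric.ball (0 : ℂ) 1 \ {0}) :=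
    Metric.isOpen_ball.sdiff isClosed_singleton
  have hUnifSphere : TendstoUniformlyOn f 0 atTop (Metric.sphere (0 : ℂ) r') :=
    (tendstoLocallyUniformlyOn_iff_forall_isCompact hopen).mp hconv _ hsub
      (isCompact_sphere _ _)
  rw [Metric.tendstoUniformlyOn_iff] at hUnifSphere ⊢
  intro ε hε
  filter_upwards [hUnifSphere (ε/2) (by positivity)] with j hj x hx
  have hcb : Metric.closedBall (0 : ℂ) r' ⊆ Metric.ball (0 : ℂ) 1 :=
    Metric.closedBall_subset_ball hr'1
  have hdiff : DiffContOnCl ℂ (f j) (Metric.ball (0 : ℂ) r') := by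
    apply DifferentiableOn.diffContOnCl
    apply (hf j).mono
    rw [closure_ball _ hr'0.ne']
    exact hcb
  have hbound : ∀ z ∈ frontier (Metric.ball (0 : ℂ) r'), ‖f j z‖ ≤ ε/2 := by
    intro z hz
    rw [frontier_ball _ hr'0.ne'] at hz
    have := hj z hz
    simp only [Pi.zero_apply, dist_zero_left] at this
    exact this.le
  have hxcl : x ∈ closure (Metric.ball (0 : ℂ) r') := by
    rw [closure_ball _ hr'0.ne']
    exact hKr' hx
  have hle : ‖f j x‖ ≤ ε/2 :=
    Complex.norm_le_of_forall_mem_frontier_norm_le Metric.isBounded_ball hdiff hbound hxcl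
  simp only [Pi.zero_apply, dist_zero_left]
  linarith
end
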